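/- arXiv:2101.10392 — 3 statements merged into one kernel-verified Lean document; each statement's English description precedes it below -/
import Mathlib

section
/- The function τ(x,y,t) = a₀ + Σⱼ₌₁^g aⱼ exp(uⱼx + vⱼy + wⱼt), with uⱼ = κⱼ - κ₀, vⱼ = κⱼ² - κ₀², wⱼ = κⱼ³ - κ₀³ and arbitrary real coefficients aⱼ, satisfies Hirota's differential equation τ·τ_xxxx - 4τ_xxx·τ_x + 3τ_xx² + 4τ_x·τ_t - 4τ·τ_xt + 3τ·τ_yy - 3τ_y² = 0. -/
noncomputable def pdx (f : ℝ → ℝ → ℝ → ℝ) : ℝ → ℝ → ℝ → ℝ :=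
  fun x y t => deriv (fun s => f s y t) x

noncomputable def pdy (f : ℝ → ℝ → ℝ → ℝ) : ℝ → ℝ → ℝ → ℝ :=
  fun x y t => deriv (fun s => f x s t) y

noncomputable def pdt (f : ℝ → ℝ → ℝ → ℝ) : ℝ → ℝ → ℝ → ℝ :=
  fun x y t => deriv (fun s => f x y s) t

/-- Hirota's bilinear differential equation for τ(x,y,t). -/
def SatisfiesHirota (τ : ℝ → ℝ → ℝ → ℝ) : Prop :=
  ∀ x y t : ℝ,
    τ x y t * pdx (pdx (pdx (pdx τ))) x y t
      - 4 * pdx (pdx (pdx τ)) x y t * pdx τ x y t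
      + 3 * (pdx (pdx τ) x y t) ^ 2
      + 4 * pdx τ x y t * pdt τ x y t
      - 4 * τ x y t * pdt (pdx τ) x y t
      + 3 * τ x y t * pdy (pdy τ) x y t
      - 3 * (pdy τ x y t) ^ 2 = 0

/-!
The Hirota expression of τ is half of `P(D) τ · τ` for the bilinear operator
`P(D) = D_x⁴ - 4 D_x D_t + 3 D_y²`. For an exponential sum `τ = Σᵢ cᵢ e^{θᵢ}` with
`θᵢ = uᵢ x + vᵢ y + wᵢ t` it is therefore `Σᵢⱼ cᵢ cⱼ e^{θᵢ + θⱼ} Q(i, j)`, where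
`Q(i, j) + Q(j, i) = P(uᵢ - uⱼ, vᵢ - vⱼ, wᵢ - wⱼ)`, so the double sum vanishes as soon as `P`
vanishes on all differences. Writing `a₀` as the exponential with `κ = κ₀`, these differences are
`(κᵢ - κⱼ, κᵢ² - κⱼ², κᵢ³ - κⱼ³)`, and `(p - q)⁴ - 4 (p - q)(p³ - q³) + 3 (p² - q²)² = 0`.
-/

open Finset Real

theorem Finset.sum_sum_eq_zero_of_antisymm {ι M : Type*} [AddCommGroup M] [IsAddTorsionFree M]
    (s : Finset ι) {f : ι → ι → M} (hf : ∀ i j, f i j = -f j i) :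
    ∑ i ∈ s, ∑ j ∈ s, f i j = 0 := by
  refine self_eq_neg.mp ?_
  calc ∑ i ∈ s, ∑ j ∈ s, f i j = ∑ i ∈ s, ∑ j ∈ s, -f j i :=
        sum_congr rfl fun i _ => sum_congr rfl fun j _ => hf i j
    _ = -∑ i ∈ s, ∑ j ∈ s, f i j := by rw [sum_comm]; simp only [sum_neg_distrib]

section ExpSum

variable {ι : Type*} [Fintype ι]

noncomputable def expSum (c u v w : ι → ℝ) : ℝ → ℝ → ℝ → ℝ :=
  fun x y t => ∑ i, c i * exp (u i * x + v i * y + w i * t)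

lemma hasDerivAt_sum_mul_exp (c a b : ι → ℝ) (s : ℝ) :
    HasDerivAt (fun s => ∑ i, c i * exp (a i * s + b i))
      (∑ i, c i * a i * exp (a i * s + b i)) s :=
  HasDerivAt.fun_sum fun i _ =>
    ((((hasDerivAt_id' s).const_mul (a i)).add_const (b i)).exp.const_mul (c i)).congr_deriv
      (by ring)

variable (c u v w : ι → ℝ)

lemma pdx_expSum : pdx (expSum c u v w) = expSum (c * u) u v w := by
  funext x y t
  have h := hasDerivAt_sum_mul_exp c u (fun i => v i * y + w i * t) x
  simp only [← add_assoc] at h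
  exact h.deriv

lemma pdy_expSum : pdy (expSum c u v w) = expSum (c * v) u v w := by
  funext x y t
  have h := hasDerivAt_sum_mul_exp c v (fun i => u i * x + w i * t) y
  simp only [add_comm (v _ * _), add_right_comm _ (w _ * t)] at h
  exact h.deriv

lemma pdt_expSum : pdt (expSum c u v w) = expSum (c * w) u v w := by
  funext x y t
  have h := hasDerivAt_sum_mul_exp c w (fun i => u i * x + v i * y) t
  simp only [add_comm (w _ * _)] at h
  exact h.deriv

def hirotaPolynomial (p q r : ℝ) : ℝ := p ^ 4 - 4 * p * r + 3 * q ^ 2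

theorem satisfiesHirota_expSum
    (h : ∀ i j, hirotaPolynomial (u i - u j) (v i - v j) (w i - w j) = 0) :
    SatisfiesHirota (expSum c u v w) := by
  intro x y t
  unfold hirotaPolynomial at h
  set E : ι → ℝ := fun i => c i * exp (u i * x + v i * y + w i * t) with hE
  have antisymm : ∀ i j, E i * E j * (u j ^ 4 - 4 * u i ^ 3 * u j + 3 * u i ^ 2 * u j ^ 2
      + 4 * u i * w j - 4 * u j * w j + 3 * v j ^ 2 - 3 * v i * v j)
      = -(E j * E i * (u i ^ 4 - 4 * u j ^ 3 * u i + 3 * u j ^ 2 * u i ^ 2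
      + 4 * u j * w i - 4 * u i * w i + 3 * v i ^ 2 - 3 * v j * v i)) := fun i j => by
    linear_combination E i * E j * h i j
  rw [← sum_sum_eq_zero_of_antisymm univ antisymm]
  simp only [hE, pdx_expSum, pdy_expSum, pdt_expSum, expSum, Pi.mul_apply, pow_two, sum_mul,
    mul_sum, ← sum_sub_distrib, ← sum_add_distrib]
  rw [sum_comm]
  exact sum_congr rfl fun i _ => sum_congr rfl fun j _ => by ring

lemma hirotaPolynomial_sub_pow (p q : ℝ) :
    hirotaPolynomial (p - q) (p ^ 2 - q ^ 2) (p ^ 3 - q ^ 3) = 0 := by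
  unfold hirotaPolynomial; ring

theorem satisfiesHirota_expSum_sub_pow (κ : ι → ℝ) (κ₀ : ℝ) :
    SatisfiesHirota (expSum c (fun i => κ i - κ₀) (fun i => κ i ^ 2 - κ₀ ^ 2)
      (fun i => κ i ^ 3 - κ₀ ^ 3)) :=
  satisfiesHirota_expSum _ _ _ _ fun i j => by
    simpa only [sub_sub_sub_cancel_right] using hirotaPolynomial_sub_pow (κ i) (κ j)

end ExpSum

/-- The simplex tau function τ = a₀ + Σⱼ aⱼ exp(uⱼx + vⱼy + wⱼt), with
uⱼ = κⱼ - κ₀, vⱼ = κⱼ² - κ₀², wⱼ = κⱼ³ - κ₀³, satisfies Hirota's equation. -/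
theorem simplex_tau_satisfies_hirota {g : ℕ} (κ₀ a₀ : ℝ) (κ a : Fin g → ℝ) :
    SatisfiesHirota (fun x y t =>
      a₀ + ∑ j, a j * Real.exp ((κ j - κ₀) * x + (κ j ^ 2 - κ₀ ^ 2) * y
        + (κ j ^ 3 - κ₀ ^ 3) * t)) := by
  convert satisfiesHirota_expSum_sub_pow (Option.elim · a₀ a) (Option.elim · κ₀ κ) κ₀ using 1
  funext x y t
  simp [expSum, Fintype.sum_option]
end

section
/- If a smooth function τ(x,y,t) is everywhere positive and satisfies Hirota's equation τ·τ_xxxx - 4τ_xxx·τ_x + 3τ_xx² + 4τ_x·τ_t - 4τ·τ_xt + 3τ·τ_yy - 3τ_y² = 0, then p = 2·∂²/∂x² log τ satisfies the KP equation ∂/∂x(4p_t - 6p·p_x - p_xxx) = 3p_yy. -/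
/-! ### Auxiliary infrastructure: directional derivatives on ℝ³ -/

/-- Directional derivative operator. -/
noncomputable def Dv (v : ℝ×ℝ×ℝ) (g : ℝ×ℝ×ℝ → ℝ) : ℝ×ℝ×ℝ → ℝ := fun q => fderiv ℝ g q v

def KPe1 : ℝ×ℝ×ℝ := (1,0,0)
def KPe2 : ℝ×ℝ×ℝ := (0,1,0)
def KPe3 : ℝ×ℝ×ℝ := (0,0,1)

lemma Dv_smooth {g : ℝ×ℝ×ℝ → ℝ} (hg : ContDiff ℝ (⊤ : ℕ∞) g) (v : ℝ×ℝ×ℝ) : ContDiff ℝ (⊤ : ℕ∞) (Dv v g) :=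
  (hg.fderiv_right (by simp)).clm_apply contDiff_const

private lemma dat {g : ℝ×ℝ×ℝ → ℝ} (hg : ContDiff ℝ (⊤ : ℕ∞) g) (q : ℝ×ℝ×ℝ) :
    HasFDerivAt g (fderiv ℝ g q) q :=
  ((hg.differentiable (by simp)).differentiableAt).hasFDerivAt

lemma Dv_const (v : ℝ×ℝ×ℝ) (c : ℝ) : Dv v (fun _ => c) = fun _ => 0 := by
  funext q; simp [Dv]

lemma Dv_const_mul {g : ℝ×ℝ×ℝ → ℝ} (v : ℝ×ℝ×ℝ) (c : ℝ) (hg : ContDiff ℝ (⊤ : ℕ∞) g) :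
    Dv v (fun q => c * g q) = fun q => c * Dv v g q := by
  funext q
  simp [Dv, fderiv_const_mul ((hg.differentiable (by simp)).differentiableAt)]

lemma Dv_comm {g : ℝ×ℝ×ℝ → ℝ} (hg : ContDiff ℝ (⊤ : ℕ∞) g) (v w : ℝ×ℝ×ℝ) :
    Dv v (Dv w g) = Dv w (Dv v g) := by
  funext q
  have hd : ∀ y, HasFDerivAt g (fderiv ℝ g y) y := fun y => dat hg y
  have h2 : HasFDerivAt (fderiv ℝ g) (fderiv ℝ (fderiv ℝ g) q) q :=
    (((hg.fderiv_right (m := (⊤ : ℕ∞)) (by simp)).differentiable (by simp)).differentiableAt).hasFDerivAt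
  have hsymm := second_derivative_symmetric hd h2
  have hw : HasFDerivAt (fun p => fderiv ℝ g p w)
      ((ContinuousLinearMap.apply ℝ ℝ w).comp (fderiv ℝ (fderiv ℝ g) q)) q :=
    (ContinuousLinearMap.apply ℝ ℝ w).hasFDerivAt.comp q h2
  have hv : HasFDerivAt (fun p => fderiv ℝ g p v)
      ((ContinuousLinearMap.apply ℝ ℝ v).comp (fderiv ℝ (fderiv ℝ g) q)) q :=
    (ContinuousLinearMap.apply ℝ ℝ v).hasFDerivAt.comp q h2
  show fderiv ℝ (fun p => fderiv ℝ g p w) q v = fderiv ℝ (fun p => fderiv ℝ g p v) q w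
  rw [hw.fderiv, hv.fderiv]
  exact hsymm v w

lemma Dv_exp {L : ℝ×ℝ×ℝ → ℝ} (hL : ContDiff ℝ (⊤ : ℕ∞) L) (v : ℝ×ℝ×ℝ) :
    Dv v (fun q => Real.exp (L q)) = fun q => Dv v L q * Real.exp (L q) := by
  funext q
  have h : HasFDerivAt (fun q => Real.exp (L q)) (Real.exp (L q) • fderiv ℝ L q) q :=
    (Real.hasDerivAt_exp (L q)).comp_hasFDerivAt q (dat hL q)
  show fderiv ℝ (fun q => Real.exp (L q)) q v = _
  rw [h.fderiv]; simp [Dv, mul_comm]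

lemma Dv_mul_exp {L b : ℝ×ℝ×ℝ → ℝ} (hL : ContDiff ℝ (⊤ : ℕ∞) L) (hb : ContDiff ℝ (⊤ : ℕ∞) b) (v : ℝ×ℝ×ℝ) :
    Dv v (fun q => b q * Real.exp (L q))
      = fun q => (Dv v b q + b q * Dv v L q) * Real.exp (L q) := by
  funext q
  have he : HasFDerivAt (fun q => Real.exp (L q)) (Real.exp (L q) • fderiv ℝ L q) q :=
    (Real.hasDerivAt_exp (L q)).comp_hasFDerivAt q (dat hL q)
  have H := (dat hb q).mul he
  show fderiv ℝ _ q v = _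
  erw [H.fderiv]; simp [Dv]; ring

lemma Dv_P2 {a b c : ℝ×ℝ×ℝ → ℝ} (v : ℝ×ℝ×ℝ)
    (ha : ContDiff ℝ (⊤ : ℕ∞) a) (hb : ContDiff ℝ (⊤ : ℕ∞) b) (hc : ContDiff ℝ (⊤ : ℕ∞) c) :
    Dv v (fun q => a q + b q * c q)
      = fun q => Dv v a q + (Dv v b q * c q + b q * Dv v c q) := by
  funext q
  have H := (dat ha q).add ((dat hb q).mul (dat hc q))
  show fderiv ℝ _ q v = _
  erw [H.fderiv]; simp [Dv]; ring

lemma Dv_P3 {a b c : ℝ×ℝ×ℝ → ℝ} (v : ℝ×ℝ×ℝ)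
    (ha : ContDiff ℝ (⊤ : ℕ∞) a) (hb : ContDiff ℝ (⊤ : ℕ∞) b) (hc : ContDiff ℝ (⊤ : ℕ∞) c) :
    Dv v (fun q => a q + 3*(b q*c q) + b q*b q*b q)
      = fun q => Dv v a q + 3*(Dv v b q*c q + b q*Dv v c q) + 3*(b q*b q*Dv v b q) := by
  funext q
  have H := ((dat ha q).add (((dat hb q).mul (dat hc q)).const_mul 3)).add
      (((dat hb q).mul (dat hb q)).mul (dat hb q))
  show fderiv ℝ _ q v = _
  erw [H.fderiv]; simp [Dv]; ring

lemma Dv_G {a b c d : ℝ×ℝ×ℝ → ℝ} (v : ℝ×ℝ×ℝ)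
    (ha : ContDiff ℝ (⊤ : ℕ∞) a) (hb : ContDiff ℝ (⊤ : ℕ∞) b) (hc : ContDiff ℝ (⊤ : ℕ∞) c) (hd : ContDiff ℝ (⊤ : ℕ∞) d) :
    Dv v (fun q => a q + 6*(b q*b q) - 4*c q + 3*d q)
      = fun q => Dv v a q + 6*(Dv v b q*b q + b q*Dv v b q) - 4*Dv v c q + 3*Dv v d q := by
  funext q
  have H := (((dat ha q).add (((dat hb q).mul (dat hb q)).const_mul 6)).sub
      ((dat hc q).const_mul 4)).add ((dat hd q).const_mul 3)
  show fderiv ℝ _ q v = _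
  erw [H.fderiv]; simp [Dv]; ring

lemma Dv_G2 {a b c d e : ℝ×ℝ×ℝ → ℝ} (v : ℝ×ℝ×ℝ)
    (ha : ContDiff ℝ (⊤ : ℕ∞) a) (hb : ContDiff ℝ (⊤ : ℕ∞) b) (hc : ContDiff ℝ (⊤ : ℕ∞) c)
    (hd : ContDiff ℝ (⊤ : ℕ∞) d) (he : ContDiff ℝ (⊤ : ℕ∞) e) :
    Dv v (fun q => a q + 6*(b q*c q + c q*b q) - 4*d q + 3*e q)
      = fun q => Dv v a q + 6*((Dv v b q*c q + b q*Dv v c q) + (Dv v c q*b q + c q*Dv v b q))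
          - 4*Dv v d q + 3*Dv v e q := by
  funext q
  have H := (((dat ha q).add ((((dat hb q).mul (dat hc q)).add
      ((dat hc q).mul (dat hb q))).const_mul 6)).sub
      ((dat hd q).const_mul 4)).add ((dat he q).const_mul 3)
  show fderiv ℝ _ q v = _
  erw [H.fderiv]; simp [Dv]; ring

lemma Dv_big {a b c d : ℝ×ℝ×ℝ → ℝ} (v : ℝ×ℝ×ℝ)
    (ha : ContDiff ℝ (⊤ : ℕ∞) a) (hb : ContDiff ℝ (⊤ : ℕ∞) b) (hc : ContDiff ℝ (⊤ : ℕ∞) c) (hd : ContDiff ℝ (⊤ : ℕ∞) d) :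
    Dv v (fun q => 4*(2*a q) - 6*(2*b q)*(2*c q) - 2*d q)
      = fun q => 8*Dv v a q - 24*(Dv v b q*c q + b q*Dv v c q) - 2*Dv v d q := by
  funext q
  have H := (((((dat ha q).const_mul 2).const_mul 4).sub
      ((((dat hb q).const_mul 2).const_mul 6).mul ((dat hc q).const_mul 2))).sub
      ((dat hd q).const_mul 2))
  show fderiv ℝ _ q v = _
  erw [H.fderiv]; simp [Dv]; ring

lemma pdx_curry (g : ℝ×ℝ×ℝ → ℝ) (hg : ContDiff ℝ (⊤ : ℕ∞) g) :
    pdx (fun a b c => g (a,b,c)) = fun a b c => Dv KPe1 g (a,b,c) := by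
  funext x y t
  have hι : HasDerivAt (fun s : ℝ => ((s, (y,t)) : ℝ×ℝ×ℝ)) KPe1 x :=
    HasDerivAt.prodMk (hasDerivAt_id x) (hasDerivAt_const x (y,t))
  exact ((dat hg (x,y,t)).comp_hasDerivAt x hι).deriv

lemma pdy_curry (g : ℝ×ℝ×ℝ → ℝ) (hg : ContDiff ℝ (⊤ : ℕ∞) g) :
    pdy (fun a b c => g (a,b,c)) = fun a b c => Dv KPe2 g (a,b,c) := by
  funext x y t
  have hι : HasDerivAt (fun s : ℝ => ((x, (s,t)) : ℝ×ℝ×ℝ)) KPe2 y :=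
    HasDerivAt.prodMk (hasDerivAt_const y x) (HasDerivAt.prodMk (hasDerivAt_id y) (hasDerivAt_const y t))
  exact ((dat hg (x,y,t)).comp_hasDerivAt y hι).deriv

lemma pdt_curry (g : ℝ×ℝ×ℝ → ℝ) (hg : ContDiff ℝ (⊤ : ℕ∞) g) :
    pdt (fun a b c => g (a,b,c)) = fun a b c => Dv KPe3 g (a,b,c) := by
  funext x y t
  have hι : HasDerivAt (fun s : ℝ => ((x, (y,s)) : ℝ×ℝ×ℝ)) KPe3 t :=
    HasDerivAt.prodMk (hasDerivAt_const t x) (HasDerivAt.prodMk (hasDerivAt_const t y) (hasDerivAt_id t))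
  exact ((dat hg (x,y,t)).comp_hasDerivAt t hι).deriv

lemma KP_hirotaG {L : ℝ×ℝ×ℝ → ℝ} (hL : ContDiff ℝ (⊤ : ℕ∞) L)
    (hH : ∀ q : ℝ×ℝ×ℝ,
      Real.exp (L q) * Dv KPe1 (Dv KPe1 (Dv KPe1 (Dv KPe1 (fun q => Real.exp (L q))))) q
      - 4 * Dv KPe1 (Dv KPe1 (Dv KPe1 (fun q => Real.exp (L q)))) q
          * Dv KPe1 (fun q => Real.exp (L q)) q
      + 3 * (Dv KPe1 (Dv KPe1 (fun q => Real.exp (L q))) q) ^ 2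
      + 4 * Dv KPe1 (fun q => Real.exp (L q)) q * Dv KPe3 (fun q => Real.exp (L q)) q
      - 4 * Real.exp (L q) * Dv KPe3 (Dv KPe1 (fun q => Real.exp (L q))) q
      + 3 * Real.exp (L q) * Dv KPe2 (Dv KPe2 (fun q => Real.exp (L q))) q
      - 3 * (Dv KPe2 (fun q => Real.exp (L q)) q) ^ 2 = 0) :
    ∀ q : ℝ×ℝ×ℝ,
      Dv KPe1 (Dv KPe1 (Dv KPe1 (Dv KPe1 L))) q
        + 6 * (Dv KPe1 (Dv KPe1 L) q * Dv KPe1 (Dv KPe1 L) q)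
        - 4 * Dv KPe3 (Dv KPe1 L) q + 3 * Dv KPe2 (Dv KPe2 L) q = 0 := by
  have s1 : ContDiff ℝ (⊤ : ℕ∞) (Dv KPe1 L) := Dv_smooth hL KPe1
  have s11 : ContDiff ℝ (⊤ : ℕ∞) (Dv KPe1 (Dv KPe1 L)) := Dv_smooth s1 KPe1
  have s111 : ContDiff ℝ (⊤ : ℕ∞) (Dv KPe1 (Dv KPe1 (Dv KPe1 L))) := Dv_smooth s11 KPe1
  have s2 : ContDiff ℝ (⊤ : ℕ∞) (Dv KPe2 L) := Dv_smooth hL KPe2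
  have A1 : Dv KPe1 (fun q => Real.exp (L q)) = fun q => Dv KPe1 L q * Real.exp (L q) :=
    Dv_exp hL KPe1
  have A2 : Dv KPe1 (Dv KPe1 (fun q => Real.exp (L q)))
      = fun q => (Dv KPe1 (Dv KPe1 L) q + Dv KPe1 L q * Dv KPe1 L q) * Real.exp (L q) := by
    rw [A1]; exact Dv_mul_exp hL s1 KPe1
  have A3 : Dv KPe1 (Dv KPe1 (Dv KPe1 (fun q => Real.exp (L q))))
      = fun q => (Dv KPe1 (Dv KPe1 (Dv KPe1 L)) q
          + 3*(Dv KPe1 L q * Dv KPe1 (Dv KPe1 L) q)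
          + Dv KPe1 L q * Dv KPe1 L q * Dv KPe1 L q) * Real.exp (L q) := by
    rw [A2]
    have step : Dv KPe1 (fun q => (Dv KPe1 (Dv KPe1 L) q + Dv KPe1 L q * Dv KPe1 L q) * Real.exp (L q))
        = fun q => (Dv KPe1 (fun q => Dv KPe1 (Dv KPe1 L) q + Dv KPe1 L q * Dv KPe1 L q) q
            + (Dv KPe1 (Dv KPe1 L) q + Dv KPe1 L q * Dv KPe1 L q) * Dv KPe1 L q) * Real.exp (L q) :=
      Dv_mul_exp hL (s11.add (s1.mul s1)) KPe1
    have step2 : Dv KPe1 (fun q => Dv KPe1 (Dv KPe1 L) q + Dv KPe1 L q * Dv KPe1 L q)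
        = fun q => Dv KPe1 (Dv KPe1 (Dv KPe1 L)) q
            + (Dv KPe1 (Dv KPe1 L) q * Dv KPe1 L q + Dv KPe1 L q * Dv KPe1 (Dv KPe1 L) q) :=
      Dv_P2 KPe1 s11 s1 s1
    rw [step]; funext q; simp only [step2]; ring
  have A4 : Dv KPe1 (Dv KPe1 (Dv KPe1 (Dv KPe1 (fun q => Real.exp (L q)))))
      = fun q => (Dv KPe1 (Dv KPe1 (Dv KPe1 (Dv KPe1 L))) q
          + 4*(Dv KPe1 L q * Dv KPe1 (Dv KPe1 (Dv KPe1 L)) q)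
          + 3*(Dv KPe1 (Dv KPe1 L) q * Dv KPe1 (Dv KPe1 L) q)
          + 6*(Dv KPe1 L q * Dv KPe1 L q * Dv KPe1 (Dv KPe1 L) q)
          + Dv KPe1 L q * Dv KPe1 L q * Dv KPe1 L q * Dv KPe1 L q) * Real.exp (L q) := by
    rw [A3]
    have step : Dv KPe1 (fun q => (Dv KPe1 (Dv KPe1 (Dv KPe1 L)) q
            + 3*(Dv KPe1 L q * Dv KPe1 (Dv KPe1 L) q)
            + Dv KPe1 L q * Dv KPe1 L q * Dv KPe1 L q) * Real.exp (L q))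
        = fun q => (Dv KPe1 (fun q => Dv KPe1 (Dv KPe1 (Dv KPe1 L)) q
            + 3*(Dv KPe1 L q * Dv KPe1 (Dv KPe1 L) q)
            + Dv KPe1 L q * Dv KPe1 L q * Dv KPe1 L q) q
            + (Dv KPe1 (Dv KPe1 (Dv KPe1 L)) q
            + 3*(Dv KPe1 L q * Dv KPe1 (Dv KPe1 L) q)
            + Dv KPe1 L q * Dv KPe1 L q * Dv KPe1 L q) * Dv KPe1 L q) * Real.exp (L q) :=
      Dv_mul_exp hL (((s111).add (contDiff_const.mul (s1.mul s11))).add ((s1.mul s1).mul s1)) KPe1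
    have step2 : Dv KPe1 (fun q => Dv KPe1 (Dv KPe1 (Dv KPe1 L)) q
            + 3*(Dv KPe1 L q * Dv KPe1 (Dv KPe1 L) q)
            + Dv KPe1 L q * Dv KPe1 L q * Dv KPe1 L q)
        = fun q => Dv KPe1 (Dv KPe1 (Dv KPe1 (Dv KPe1 L))) q
            + 3*(Dv KPe1 (Dv KPe1 L) q * Dv KPe1 (Dv KPe1 L) q
                + Dv KPe1 L q * Dv KPe1 (Dv KPe1 (Dv KPe1 L)) q)
            + 3*(Dv KPe1 L q * Dv KPe1 L q * Dv KPe1 (Dv KPe1 L) q) :=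
      Dv_P3 KPe1 s111 s1 s11
    rw [step]; funext q; simp only [step2]; ring
  have B3 : Dv KPe3 (fun q => Real.exp (L q)) = fun q => Dv KPe3 L q * Real.exp (L q) :=
    Dv_exp hL KPe3
  have B2 : Dv KPe2 (fun q => Real.exp (L q)) = fun q => Dv KPe2 L q * Real.exp (L q) :=
    Dv_exp hL KPe2
  have C : Dv KPe3 (Dv KPe1 (fun q => Real.exp (L q)))
      = fun q => (Dv KPe3 (Dv KPe1 L) q + Dv KPe1 L q * Dv KPe3 L q) * Real.exp (L q) := by
    rw [A1]; exact Dv_mul_exp hL s1 KPe3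
  have D22 : Dv KPe2 (Dv KPe2 (fun q => Real.exp (L q)))
      = fun q => (Dv KPe2 (Dv KPe2 L) q + Dv KPe2 L q * Dv KPe2 L q) * Real.exp (L q) := by
    rw [B2]; exact Dv_mul_exp hL s2 KPe2
  intro q
  have h := hH q
  rw [A4, A3, A2, C, D22, A1, B3, B2] at h
  simp only [] at h
  have h2 : Real.exp (L q) ^ 2 *
      (Dv KPe1 (Dv KPe1 (Dv KPe1 (Dv KPe1 L))) q
        + 6 * (Dv KPe1 (Dv KPe1 L) q * Dv KPe1 (Dv KPe1 L) q)
        - 4 * Dv KPe3 (Dv KPe1 L) q + 3 * Dv KPe2 (Dv KPe2 L) q) = 0 := by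
    linear_combination h
  rcases mul_eq_zero.mp h2 with h4 | h4
  · exact absurd h4 (pow_ne_zero 2 (Real.exp_ne_zero (L q)))
  · exact h4

lemma KP_from_G {L : ℝ×ℝ×ℝ → ℝ} (hL : ContDiff ℝ (⊤ : ℕ∞) L)
    (hG : ∀ q : ℝ×ℝ×ℝ,
      Dv KPe1 (Dv KPe1 (Dv KPe1 (Dv KPe1 L))) q
        + 6 * (Dv KPe1 (Dv KPe1 L) q * Dv KPe1 (Dv KPe1 L) q)
        - 4 * Dv KPe3 (Dv KPe1 L) q + 3 * Dv KPe2 (Dv KPe2 L) q = 0) :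
    ∀ q : ℝ×ℝ×ℝ,
      Dv KPe1 (fun p => 4 * Dv KPe3 (fun p => 2 * Dv KPe1 (Dv KPe1 L) p) p
          - 6 * (2 * Dv KPe1 (Dv KPe1 L) p) * Dv KPe1 (fun p => 2 * Dv KPe1 (Dv KPe1 L) p) p
          - Dv KPe1 (Dv KPe1 (Dv KPe1 (fun p => 2 * Dv KPe1 (Dv KPe1 L) p))) p) q
        = 3 * Dv KPe2 (Dv KPe2 (fun p => 2 * Dv KPe1 (Dv KPe1 L) p)) q := by
  have s1 : ContDiff ℝ (⊤ : ℕ∞) (Dv KPe1 L) := Dv_smooth hL KPe1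
  have s11 : ContDiff ℝ (⊤ : ℕ∞) (Dv KPe1 (Dv KPe1 L)) := Dv_smooth s1 KPe1
  have s111 : ContDiff ℝ (⊤ : ℕ∞) (Dv KPe1 (Dv KPe1 (Dv KPe1 L))) := Dv_smooth s11 KPe1
  have s1111 : ContDiff ℝ (⊤ : ℕ∞) (Dv KPe1 (Dv KPe1 (Dv KPe1 (Dv KPe1 L)))) := Dv_smooth s111 KPe1
  have s11111 := Dv_smooth s1111 KPe1
  have s311 : ContDiff ℝ (⊤ : ℕ∞) (Dv KPe3 (Dv KPe1 (Dv KPe1 L))) := Dv_smooth s11 KPe3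
  have s211 : ContDiff ℝ (⊤ : ℕ∞) (Dv KPe2 (Dv KPe1 (Dv KPe1 L))) := Dv_smooth s11 KPe2
  have s31 : ContDiff ℝ (⊤ : ℕ∞) (Dv KPe3 (Dv KPe1 L)) := Dv_smooth s1 KPe3
  have s2 : ContDiff ℝ (⊤ : ℕ∞) (Dv KPe2 L) := Dv_smooth hL KPe2
  have s22 : ContDiff ℝ (⊤ : ℕ∞) (Dv KPe2 (Dv KPe2 L)) := Dv_smooth s2 KPe2
  intro q
  have c1 : Dv KPe1 (fun p => 2 * Dv KPe1 (Dv KPe1 L) p)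
      = fun p => 2 * Dv KPe1 (Dv KPe1 (Dv KPe1 L)) p := Dv_const_mul KPe1 2 s11
  have c3 : Dv KPe3 (fun p => 2 * Dv KPe1 (Dv KPe1 L) p)
      = fun p => 2 * Dv KPe3 (Dv KPe1 (Dv KPe1 L)) p := Dv_const_mul KPe3 2 s11
  have c2y : Dv KPe2 (fun p => 2 * Dv KPe1 (Dv KPe1 L) p)
      = fun p => 2 * Dv KPe2 (Dv KPe1 (Dv KPe1 L)) p := Dv_const_mul KPe2 2 s11
  have c4 : Dv KPe1 (fun p => 2 * Dv KPe1 (Dv KPe1 (Dv KPe1 L)) p)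
      = fun p => 2 * Dv KPe1 (Dv KPe1 (Dv KPe1 (Dv KPe1 L))) p := Dv_const_mul KPe1 2 s111
  have c5 : Dv KPe1 (fun p => 2 * Dv KPe1 (Dv KPe1 (Dv KPe1 (Dv KPe1 L))) p)
      = fun p => 2 * Dv KPe1 (Dv KPe1 (Dv KPe1 (Dv KPe1 (Dv KPe1 L)))) p := Dv_const_mul KPe1 2 s1111
  have c6 : Dv KPe2 (fun p => 2 * Dv KPe2 (Dv KPe1 (Dv KPe1 L)) p)
      = fun p => 2 * Dv KPe2 (Dv KPe2 (Dv KPe1 (Dv KPe1 L))) p := Dv_const_mul KPe2 2 s211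
  simp only [c1, c3, c2y, c4, c5, c6]
  rw [Dv_big (a := Dv KPe3 (Dv KPe1 (Dv KPe1 L))) (b := Dv KPe1 (Dv KPe1 L))
      (c := Dv KPe1 (Dv KPe1 (Dv KPe1 L)))
      (d := Dv KPe1 (Dv KPe1 (Dv KPe1 (Dv KPe1 (Dv KPe1 L))))) KPe1 s311 s11 s111 s11111]
  have k0 : Dv KPe3 (Dv KPe1 (Dv KPe1 L)) = Dv KPe1 (Dv KPe3 (Dv KPe1 L)) :=
    Dv_comm s1 KPe3 KPe1
  have k1 : Dv KPe2 (Dv KPe1 (Dv KPe1 L)) = Dv KPe1 (Dv KPe2 (Dv KPe1 L)) :=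
    Dv_comm s1 KPe2 KPe1
  have k2 : Dv KPe2 (Dv KPe1 (Dv KPe2 (Dv KPe1 L))) = Dv KPe1 (Dv KPe2 (Dv KPe2 (Dv KPe1 L))) :=
    Dv_comm (Dv_smooth s1 KPe2) KPe2 KPe1
  have k3 : Dv KPe2 (Dv KPe1 L) = Dv KPe1 (Dv KPe2 L) := Dv_comm hL KPe2 KPe1
  have k4 : Dv KPe2 (Dv KPe1 (Dv KPe2 L)) = Dv KPe1 (Dv KPe2 (Dv KPe2 L)) :=
    Dv_comm (Dv_smooth hL KPe2) KPe2 KPe1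
  rw [k0, k1, k2, k3, k4]
  have hGf : (fun p => Dv KPe1 (Dv KPe1 (Dv KPe1 (Dv KPe1 L))) p
      + 6 * (Dv KPe1 (Dv KPe1 L) p * Dv KPe1 (Dv KPe1 L) p)
      - 4 * Dv KPe3 (Dv KPe1 L) p + 3 * Dv KPe2 (Dv KPe2 L) p) = fun _ => (0:ℝ) :=
    funext hG
  have t1 : Dv KPe1 (fun p => Dv KPe1 (Dv KPe1 (Dv KPe1 (Dv KPe1 L))) p
      + 6 * (Dv KPe1 (Dv KPe1 L) p * Dv KPe1 (Dv KPe1 L) p)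
      - 4 * Dv KPe3 (Dv KPe1 L) p + 3 * Dv KPe2 (Dv KPe2 L) p)
      = fun p => Dv KPe1 (Dv KPe1 (Dv KPe1 (Dv KPe1 (Dv KPe1 L)))) p
      + 6 * (Dv KPe1 (Dv KPe1 (Dv KPe1 L)) p * Dv KPe1 (Dv KPe1 L) p
          + Dv KPe1 (Dv KPe1 L) p * Dv KPe1 (Dv KPe1 (Dv KPe1 L)) p)
      - 4 * Dv KPe1 (Dv KPe3 (Dv KPe1 L)) p + 3 * Dv KPe1 (Dv KPe2 (Dv KPe2 L)) p :=
    Dv_G KPe1 s1111 s11 s31 s22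
  have t0 : Dv KPe1 (fun p => Dv KPe1 (Dv KPe1 (Dv KPe1 (Dv KPe1 L))) p
      + 6 * (Dv KPe1 (Dv KPe1 L) p * Dv KPe1 (Dv KPe1 L) p)
      - 4 * Dv KPe3 (Dv KPe1 L) p + 3 * Dv KPe2 (Dv KPe2 L) p) = fun _ => (0:ℝ) := by
    rw [hGf]; exact Dv_const KPe1 0
  have e1f := t1.symm.trans t0
  have t2 : Dv KPe1 (fun p => Dv KPe1 (Dv KPe1 (Dv KPe1 (Dv KPe1 (Dv KPe1 L)))) p
      + 6 * (Dv KPe1 (Dv KPe1 (Dv KPe1 L)) p * Dv KPe1 (Dv KPe1 L) p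
          + Dv KPe1 (Dv KPe1 L) p * Dv KPe1 (Dv KPe1 (Dv KPe1 L)) p)
      - 4 * Dv KPe1 (Dv KPe3 (Dv KPe1 L)) p + 3 * Dv KPe1 (Dv KPe2 (Dv KPe2 L)) p)
      = fun p => Dv KPe1 (Dv KPe1 (Dv KPe1 (Dv KPe1 (Dv KPe1 (Dv KPe1 L))))) p
      + 6 * ((Dv KPe1 (Dv KPe1 (Dv KPe1 (Dv KPe1 L))) p * Dv KPe1 (Dv KPe1 L) p
            + Dv KPe1 (Dv KPe1 (Dv KPe1 L)) p * Dv KPe1 (Dv KPe1 (Dv KPe1 L)) p)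
          + (Dv KPe1 (Dv KPe1 (Dv KPe1 L)) p * Dv KPe1 (Dv KPe1 (Dv KPe1 L)) p
            + Dv KPe1 (Dv KPe1 L) p * Dv KPe1 (Dv KPe1 (Dv KPe1 (Dv KPe1 L))) p))
      - 4 * Dv KPe1 (Dv KPe1 (Dv KPe3 (Dv KPe1 L))) p
      + 3 * Dv KPe1 (Dv KPe1 (Dv KPe2 (Dv KPe2 L))) p :=
    Dv_G2 KPe1 s11111 s111 s11 (Dv_smooth s31 KPe1) (Dv_smooth s22 KPe1)
  have t0' : Dv KPe1 (fun p => Dv KPe1 (Dv KPe1 (Dv KPe1 (Dv KPe1 (Dv KPe1 L)))) p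
      + 6 * (Dv KPe1 (Dv KPe1 (Dv KPe1 L)) p * Dv KPe1 (Dv KPe1 L) p
          + Dv KPe1 (Dv KPe1 L) p * Dv KPe1 (Dv KPe1 (Dv KPe1 L)) p)
      - 4 * Dv KPe1 (Dv KPe3 (Dv KPe1 L)) p + 3 * Dv KPe1 (Dv KPe2 (Dv KPe2 L)) p)
      = fun _ => (0:ℝ) := by
    rw [e1f]; exact Dv_const KPe1 0
  have hKey := congrFun (t2.symm.trans t0') q
  linear_combination (-2 : ℝ) * hKey

/-- If τ is smooth, positive, and satisfies Hirota's equation, then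
p = 2 (log τ)ₓₓ satisfies the KP equation (4p_t - 6 p pₓ - pₓₓₓ)ₓ = 3 p_yy. -/
theorem hirota_implies_KP (τ : ℝ → ℝ → ℝ → ℝ)
    (hsmooth : ContDiff ℝ (⊤ : ℕ∞) (fun q : ℝ × ℝ × ℝ => τ q.1 q.2.1 q.2.2))
    (hpos : ∀ x y t, 0 < τ x y t)
    (hH : SatisfiesHirota τ) :
    ∀ x y t : ℝ,
      pdx (fun x y t =>
          4 * pdt (fun x y t => 2 * pdx (pdx (fun x y t => Real.log (τ x y t))) x y t) x y t
          - 6 * (2 * pdx (pdx (fun x y t => Real.log (τ x y t))) x y t)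
              * pdx (fun x y t => 2 * pdx (pdx (fun x y t => Real.log (τ x y t))) x y t) x y t
          - pdx (pdx (pdx (fun x y t =>
              2 * pdx (pdx (fun x y t => Real.log (τ x y t))) x y t))) x y t) x y t
      = 3 * pdy (pdy (fun x y t =>
          2 * pdx (pdx (fun x y t => Real.log (τ x y t))) x y t)) x y t := by
  intro x y t
  have hsL : ContDiff ℝ (⊤ : ℕ∞) (fun q : ℝ×ℝ×ℝ => Real.log (τ q.1 q.2.1 q.2.2)) :=
    hsmooth.log (fun q => (hpos _ _ _).ne')
  -- Hirota in directional-derivative / exponential form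
  have hHq : ∀ q : ℝ×ℝ×ℝ,
      Real.exp (Real.log (τ q.1 q.2.1 q.2.2)) * Dv KPe1 (Dv KPe1 (Dv KPe1 (Dv KPe1
        (fun q : ℝ×ℝ×ℝ => Real.exp (Real.log (τ q.1 q.2.1 q.2.2)))))) q
      - 4 * Dv KPe1 (Dv KPe1 (Dv KPe1
          (fun q : ℝ×ℝ×ℝ => Real.exp (Real.log (τ q.1 q.2.1 q.2.2))))) q
          * Dv KPe1 (fun q : ℝ×ℝ×ℝ => Real.exp (Real.log (τ q.1 q.2.1 q.2.2))) q
      + 3 * (Dv KPe1 (Dv KPe1 (fun q : ℝ×ℝ×ℝ => Real.exp (Real.log (τ q.1 q.2.1 q.2.2)))) q) ^ 2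
      + 4 * Dv KPe1 (fun q : ℝ×ℝ×ℝ => Real.exp (Real.log (τ q.1 q.2.1 q.2.2))) q
          * Dv KPe3 (fun q : ℝ×ℝ×ℝ => Real.exp (Real.log (τ q.1 q.2.1 q.2.2))) q
      - 4 * Real.exp (Real.log (τ q.1 q.2.1 q.2.2))
          * Dv KPe3 (Dv KPe1 (fun q : ℝ×ℝ×ℝ => Real.exp (Real.log (τ q.1 q.2.1 q.2.2)))) q
      + 3 * Real.exp (Real.log (τ q.1 q.2.1 q.2.2))
          * Dv KPe2 (Dv KPe2 (fun q : ℝ×ℝ×ℝ => Real.exp (Real.log (τ q.1 q.2.1 q.2.2)))) q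
      - 3 * (Dv KPe2 (fun q : ℝ×ℝ×ℝ => Real.exp (Real.log (τ q.1 q.2.1 q.2.2))) q) ^ 2
      = 0 := by
    rintro ⟨a, b, c⟩
    have h := hH a b c
    have b1 : pdx τ = fun a b c => Dv KPe1 (fun q : ℝ×ℝ×ℝ => τ q.1 q.2.1 q.2.2) (a,b,c) :=
      pdx_curry _ hsmooth
    have b2 : pdx (fun a b c => Dv KPe1 (fun q : ℝ×ℝ×ℝ => τ q.1 q.2.1 q.2.2) (a,b,c))
        = fun a b c => Dv KPe1 (Dv KPe1 (fun q : ℝ×ℝ×ℝ => τ q.1 q.2.1 q.2.2)) (a,b,c) :=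
      pdx_curry _ (Dv_smooth hsmooth KPe1)
    have b3 : pdx (fun a b c => Dv KPe1 (Dv KPe1 (fun q : ℝ×ℝ×ℝ => τ q.1 q.2.1 q.2.2)) (a,b,c))
        = fun a b c => Dv KPe1 (Dv KPe1 (Dv KPe1 (fun q : ℝ×ℝ×ℝ => τ q.1 q.2.1 q.2.2))) (a,b,c) :=
      pdx_curry _ (Dv_smooth (Dv_smooth hsmooth KPe1) KPe1)
    have b4 : pdx (fun a b c => Dv KPe1 (Dv KPe1 (Dv KPe1
          (fun q : ℝ×ℝ×ℝ => τ q.1 q.2.1 q.2.2))) (a,b,c))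
        = fun a b c => Dv KPe1 (Dv KPe1 (Dv KPe1 (Dv KPe1
          (fun q : ℝ×ℝ×ℝ => τ q.1 q.2.1 q.2.2)))) (a,b,c) :=
      pdx_curry _ (Dv_smooth (Dv_smooth (Dv_smooth hsmooth KPe1) KPe1) KPe1)
    have b5 : pdt τ = fun a b c => Dv KPe3 (fun q : ℝ×ℝ×ℝ => τ q.1 q.2.1 q.2.2) (a,b,c) :=
      pdt_curry _ hsmooth
    have b6 : pdt (fun a b c => Dv KPe1 (fun q : ℝ×ℝ×ℝ => τ q.1 q.2.1 q.2.2) (a,b,c))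
        = fun a b c => Dv KPe3 (Dv KPe1 (fun q : ℝ×ℝ×ℝ => τ q.1 q.2.1 q.2.2)) (a,b,c) :=
      pdt_curry _ (Dv_smooth hsmooth KPe1)
    have b7 : pdy τ = fun a b c => Dv KPe2 (fun q : ℝ×ℝ×ℝ => τ q.1 q.2.1 q.2.2) (a,b,c) :=
      pdy_curry _ hsmooth
    have b8 : pdy (fun a b c => Dv KPe2 (fun q : ℝ×ℝ×ℝ => τ q.1 q.2.1 q.2.2) (a,b,c))
        = fun a b c => Dv KPe2 (Dv KPe2 (fun q : ℝ×ℝ×ℝ => τ q.1 q.2.1 q.2.2)) (a,b,c) :=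
      pdy_curry _ (Dv_smooth hsmooth KPe2)
    rw [b1, b2, b3, b4, b6, b5, b7, b8] at h
    simp only [] at h
    have hFeq : (fun q : ℝ×ℝ×ℝ => τ q.1 q.2.1 q.2.2)
        = fun q : ℝ×ℝ×ℝ => Real.exp (Real.log (τ q.1 q.2.1 q.2.2)) :=
      funext fun q => (Real.exp_log (hpos _ _ _)).symm
    rw [hFeq] at h
    rw [← Real.exp_log (hpos a b c)] at h
    exact h
  have hGres := KP_hirotaG (L := fun q : ℝ×ℝ×ℝ => Real.log (τ q.1 q.2.1 q.2.2)) hsL hHq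
  -- now rewrite the goal into Dv form
  have g1 : pdx (fun x y t => Real.log (τ x y t))
      = fun a b c => Dv KPe1 (fun q : ℝ×ℝ×ℝ => Real.log (τ q.1 q.2.1 q.2.2)) (a,b,c) :=
    pdx_curry _ hsL
  have g2 : pdx (fun a b c => Dv KPe1 (fun q : ℝ×ℝ×ℝ => Real.log (τ q.1 q.2.1 q.2.2)) (a,b,c))
      = fun a b c => Dv KPe1 (Dv KPe1 (fun q : ℝ×ℝ×ℝ => Real.log (τ q.1 q.2.1 q.2.2))) (a,b,c) :=
    pdx_curry _ (Dv_smooth hsL KPe1)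
  rw [g1, g2]
  beta_reduce
  have sm2d : ContDiff ℝ (⊤ : ℕ∞) (fun p : ℝ×ℝ×ℝ =>
      2 * Dv KPe1 (Dv KPe1 (fun q : ℝ×ℝ×ℝ => Real.log (τ q.1 q.2.1 q.2.2))) p) :=
    contDiff_const.mul (Dv_smooth (Dv_smooth hsL KPe1) KPe1)
  have g3 : pdx (fun x y t =>
        2 * Dv KPe1 (Dv KPe1 (fun q : ℝ×ℝ×ℝ => Real.log (τ q.1 q.2.1 q.2.2))) (x,y,t))
      = fun a b c => Dv KPe1 (fun p =>
        2 * Dv KPe1 (Dv KPe1 (fun q : ℝ×ℝ×ℝ => Real.log (τ q.1 q.2.1 q.2.2))) p) (a,b,c) :=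
    pdx_curry _ sm2d
  have g4 : pdt (fun x y t =>
        2 * Dv KPe1 (Dv KPe1 (fun q : ℝ×ℝ×ℝ => Real.log (τ q.1 q.2.1 q.2.2))) (x,y,t))
      = fun a b c => Dv KPe3 (fun p =>
        2 * Dv KPe1 (Dv KPe1 (fun q : ℝ×ℝ×ℝ => Real.log (τ q.1 q.2.1 q.2.2))) p) (a,b,c) :=
    pdt_curry _ sm2d
  have g5 : pdy (fun x y t =>
        2 * Dv KPe1 (Dv KPe1 (fun q : ℝ×ℝ×ℝ => Real.log (τ q.1 q.2.1 q.2.2))) (x,y,t))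
      = fun a b c => Dv KPe2 (fun p =>
        2 * Dv KPe1 (Dv KPe1 (fun q : ℝ×ℝ×ℝ => Real.log (τ q.1 q.2.1 q.2.2))) p) (a,b,c) :=
    pdy_curry _ sm2d
  rw [g3, g4, g5]
  beta_reduce
  have g6 : pdx (fun a b c => Dv KPe1 (fun p =>
        2 * Dv KPe1 (Dv KPe1 (fun q : ℝ×ℝ×ℝ => Real.log (τ q.1 q.2.1 q.2.2))) p) (a,b,c))
      = fun a b c => Dv KPe1 (Dv KPe1 (fun p =>
        2 * Dv KPe1 (Dv KPe1 (fun q : ℝ×ℝ×ℝ => Real.log (τ q.1 q.2.1 q.2.2))) p)) (a,b,c) :=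
    pdx_curry _ (Dv_smooth sm2d KPe1)
  have g7 : pdx (fun a b c => Dv KPe1 (Dv KPe1 (fun p =>
        2 * Dv KPe1 (Dv KPe1 (fun q : ℝ×ℝ×ℝ => Real.log (τ q.1 q.2.1 q.2.2))) p)) (a,b,c))
      = fun a b c => Dv KPe1 (Dv KPe1 (Dv KPe1 (fun p =>
        2 * Dv KPe1 (Dv KPe1 (fun q : ℝ×ℝ×ℝ => Real.log (τ q.1 q.2.1 q.2.2))) p))) (a,b,c) :=
    pdx_curry _ (Dv_smooth (Dv_smooth sm2d KPe1) KPe1)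
  have g8 : pdy (fun a b c => Dv KPe2 (fun p =>
        2 * Dv KPe1 (Dv KPe1 (fun q : ℝ×ℝ×ℝ => Real.log (τ q.1 q.2.1 q.2.2))) p) (a,b,c))
      = fun a b c => Dv KPe2 (Dv KPe2 (fun p =>
        2 * Dv KPe1 (Dv KPe1 (fun q : ℝ×ℝ×ℝ => Real.log (τ q.1 q.2.1 q.2.2))) p)) (a,b,c) :=
    pdy_curry _ (Dv_smooth sm2d KPe2)
  rw [g6, g7, g8]
  beta_reduce
  have smBIG : ContDiff ℝ (⊤ : ℕ∞) (fun p : ℝ×ℝ×ℝ =>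
      4 * Dv KPe3 (fun p => 2 * Dv KPe1 (Dv KPe1
            (fun q : ℝ×ℝ×ℝ => Real.log (τ q.1 q.2.1 q.2.2))) p) p
      - 6 * (2 * Dv KPe1 (Dv KPe1 (fun q : ℝ×ℝ×ℝ => Real.log (τ q.1 q.2.1 q.2.2))) p)
          * Dv KPe1 (fun p => 2 * Dv KPe1 (Dv KPe1
            (fun q : ℝ×ℝ×ℝ => Real.log (τ q.1 q.2.1 q.2.2))) p) p
      - Dv KPe1 (Dv KPe1 (Dv KPe1 (fun p => 2 * Dv KPe1 (Dv KPe1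
            (fun q : ℝ×ℝ×ℝ => Real.log (τ q.1 q.2.1 q.2.2))) p))) p) :=
    ((contDiff_const.mul (Dv_smooth sm2d KPe3)).sub
      ((contDiff_const.mul (contDiff_const.mul (Dv_smooth (Dv_smooth hsL KPe1) KPe1))).mul
        (Dv_smooth sm2d KPe1))).sub
      (Dv_smooth (Dv_smooth (Dv_smooth sm2d KPe1) KPe1) KPe1)
  have g9 : pdx (fun x y t =>
        4 * Dv KPe3 (fun p => 2 * Dv KPe1 (Dv KPe1
              (fun q : ℝ×ℝ×ℝ => Real.log (τ q.1 q.2.1 q.2.2))) p) (x,y,t)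
        - 6 * (2 * Dv KPe1 (Dv KPe1 (fun q : ℝ×ℝ×ℝ => Real.log (τ q.1 q.2.1 q.2.2))) (x,y,t))
            * Dv KPe1 (fun p => 2 * Dv KPe1 (Dv KPe1
              (fun q : ℝ×ℝ×ℝ => Real.log (τ q.1 q.2.1 q.2.2))) p) (x,y,t)
        - Dv KPe1 (Dv KPe1 (Dv KPe1 (fun p => 2 * Dv KPe1 (Dv KPe1
              (fun q : ℝ×ℝ×ℝ => Real.log (τ q.1 q.2.1 q.2.2))) p))) (x,y,t))
      = fun a b c => Dv KPe1 (fun p =>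
        4 * Dv KPe3 (fun p => 2 * Dv KPe1 (Dv KPe1
              (fun q : ℝ×ℝ×ℝ => Real.log (τ q.1 q.2.1 q.2.2))) p) p
        - 6 * (2 * Dv KPe1 (Dv KPe1 (fun q : ℝ×ℝ×ℝ => Real.log (τ q.1 q.2.1 q.2.2))) p)
            * Dv KPe1 (fun p => 2 * Dv KPe1 (Dv KPe1
              (fun q : ℝ×ℝ×ℝ => Real.log (τ q.1 q.2.1 q.2.2))) p) p
        - Dv KPe1 (Dv KPe1 (Dv KPe1 (fun p => 2 * Dv KPe1 (Dv KPe1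
              (fun q : ℝ×ℝ×ℝ => Real.log (τ q.1 q.2.1 q.2.2))) p))) p) (a,b,c) :=
    pdx_curry _ smBIG
  rw [g9]
  exact KP_from_G hsL hGres (x, y, t)
end

section
/- For distinct real numbers κ₁, κ₂, κ₃ and the row vector A = (a₁, a₂, a₃) with aⱼ = Π_{i≠j}(κⱼ - κᵢ)⁻¹, the function τ(x,y,t) = Σⱼ aⱼ exp(κⱼx + κⱼ²y + κⱼ³t) satisfies Hirota's equation τ·τ_xxxx - 4τ_xxx·τ_x + 3τ_xx² + 4τ_x·τ_t - 4τ·τ_xt + 3τ·τ_yy - 3τ_y² = 0. -/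
private lemma hdx (k c : ℝ) (y t x : ℝ) :
    HasDerivAt (fun s : ℝ => c * Real.exp (k * s + k ^ 2 * y + k ^ 3 * t))
      (c * k * Real.exp (k * x + k ^ 2 * y + k ^ 3 * t)) x := by
  have h : HasDerivAt (fun s : ℝ => k * s + k ^ 2 * y + k ^ 3 * t) k x := by
    simpa using (((hasDerivAt_id x).const_mul k).add_const (k ^ 2 * y)).add_const (k ^ 3 * t)
  simpa [mul_comm, mul_assoc, mul_left_comm] using (h.exp.const_mul c)

private lemma hdy (k c : ℝ) (x t y : ℝ) :
    HasDerivAt (fun s : ℝ => c * Real.exp (k * x + k ^ 2 * s + k ^ 3 * t))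
      (c * k ^ 2 * Real.exp (k * x + k ^ 2 * y + k ^ 3 * t)) y := by
  have h : HasDerivAt (fun s : ℝ => k * x + k ^ 2 * s + k ^ 3 * t) (k ^ 2) y := by
    simpa using ((((hasDerivAt_id y).const_mul (k ^ 2)).const_add (k * x)).add_const (k ^ 3 * t))
  simpa [mul_comm, mul_assoc, mul_left_comm] using (h.exp.const_mul c)

private lemma hdt (k c : ℝ) (x y t : ℝ) :
    HasDerivAt (fun s : ℝ => c * Real.exp (k * x + k ^ 2 * y + k ^ 3 * s))
      (c * k ^ 3 * Real.exp (k * x + k ^ 2 * y + k ^ 3 * t)) t := by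
  have h : HasDerivAt (fun s : ℝ => k * x + k ^ 2 * y + k ^ 3 * s) (k ^ 3) t := by
    simpa using (((hasDerivAt_id t).const_mul (k ^ 3)).const_add (k * x + k ^ 2 * y))
  simpa [mul_comm, mul_assoc, mul_left_comm] using (h.exp.const_mul c)

private lemma Lx (κ₁ κ₂ κ₃ c₁ c₂ c₃ : ℝ) :
    pdx (fun x y t =>
        c₁ * Real.exp (κ₁ * x + κ₁ ^ 2 * y + κ₁ ^ 3 * t)
      + c₂ * Real.exp (κ₂ * x + κ₂ ^ 2 * y + κ₂ ^ 3 * t)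
      + c₃ * Real.exp (κ₃ * x + κ₃ ^ 2 * y + κ₃ ^ 3 * t)) =
    (fun x y t =>
        (c₁ * κ₁) * Real.exp (κ₁ * x + κ₁ ^ 2 * y + κ₁ ^ 3 * t)
      + (c₂ * κ₂) * Real.exp (κ₂ * x + κ₂ ^ 2 * y + κ₂ ^ 3 * t)
      + (c₃ * κ₃) * Real.exp (κ₃ * x + κ₃ ^ 2 * y + κ₃ ^ 3 * t)) := by
  funext x y t
  exact (((hdx κ₁ c₁ y t x).add (hdx κ₂ c₂ y t x)).add (hdx κ₃ c₃ y t x)).deriv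

private lemma Ly (κ₁ κ₂ κ₃ c₁ c₂ c₃ : ℝ) :
    pdy (fun x y t =>
        c₁ * Real.exp (κ₁ * x + κ₁ ^ 2 * y + κ₁ ^ 3 * t)
      + c₂ * Real.exp (κ₂ * x + κ₂ ^ 2 * y + κ₂ ^ 3 * t)
      + c₃ * Real.exp (κ₃ * x + κ₃ ^ 2 * y + κ₃ ^ 3 * t)) =
    (fun x y t =>
        (c₁ * κ₁ ^ 2) * Real.exp (κ₁ * x + κ₁ ^ 2 * y + κ₁ ^ 3 * t)
      + (c₂ * κ₂ ^ 2) * Real.exp (κ₂ * x + κ₂ ^ 2 * y + κ₂ ^ 3 * t)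
      + (c₃ * κ₃ ^ 2) * Real.exp (κ₃ * x + κ₃ ^ 2 * y + κ₃ ^ 3 * t)) := by
  funext x y t
  exact (((hdy κ₁ c₁ x t y).add (hdy κ₂ c₂ x t y)).add (hdy κ₃ c₃ x t y)).deriv

private lemma Lt (κ₁ κ₂ κ₃ c₁ c₂ c₃ : ℝ) :
    pdt (fun x y t =>
        c₁ * Real.exp (κ₁ * x + κ₁ ^ 2 * y + κ₁ ^ 3 * t)
      + c₂ * Real.exp (κ₂ * x + κ₂ ^ 2 * y + κ₂ ^ 3 * t)
      + c₃ * Real.exp (κ₃ * x + κ₃ ^ 2 * y + κ₃ ^ 3 * t)) =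
    (fun x y t =>
        (c₁ * κ₁ ^ 3) * Real.exp (κ₁ * x + κ₁ ^ 2 * y + κ₁ ^ 3 * t)
      + (c₂ * κ₂ ^ 3) * Real.exp (κ₂ * x + κ₂ ^ 2 * y + κ₂ ^ 3 * t)
      + (c₃ * κ₃ ^ 3) * Real.exp (κ₃ * x + κ₃ ^ 2 * y + κ₃ ^ 3 * t)) := by
  funext x y t
  exact (((hdt κ₁ c₁ x y t).add (hdt κ₂ c₂ x y t)).add (hdt κ₃ c₃ x y t)).deriv

/-- The (1,3)-soliton with coefficients aⱼ = Π_{i≠j}(κⱼ - κᵢ)⁻¹ satisfies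
Hirota's equation. -/
theorem one_three_soliton_satisfies_hirota (κ₁ κ₂ κ₃ : ℝ)
    (h₁₂ : κ₁ ≠ κ₂) (h₁₃ : κ₁ ≠ κ₃) (h₂₃ : κ₂ ≠ κ₃) :
    SatisfiesHirota (fun x y t =>
      ((κ₁ - κ₂) * (κ₁ - κ₃))⁻¹ * Real.exp (κ₁ * x + κ₁ ^ 2 * y + κ₁ ^ 3 * t)
      + ((κ₂ - κ₁) * (κ₂ - κ₃))⁻¹ * Real.exp (κ₂ * x + κ₂ ^ 2 * y + κ₂ ^ 3 * t)
      + ((κ₃ - κ₁) * (κ₃ - κ₂))⁻¹ * Real.exp (κ₃ * x + κ₃ ^ 2 * y + κ₃ ^ 3 * t)) := by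
  intro x y t
  simp only [Lx, Ly, Lt]
  ring
end
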